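/- arXiv:1912.03862 — 2 statements merged into one kernel-verified Lean document; each statement's English description precedes it below -/
import Mathlib

section
/- Every 2-connected multigraph G satisfying (♥)_2 other than the 2-cycle C_2 is a simple graph, i.e. has no parallel edges. -/
open scoped Classical

noncomputable section

/-- A finite multigraph: finite vertex and edge types, each edge has an unordered
pair of endpoints. -/
structure Multigraph where
  V : Type
  E : Type
  [fintypeV : Fintype V]
  [fintypeE : Fintype E]
  [decV : DecidableEq V]
  [decE : DecidableEq E]
  ends : E → Sym2 V

attribute [instance] Multigraph.fintypeV Multigraph.fintypeE Multigraph.decV Multigraph.decE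

namespace Multigraph

variable (G : Multigraph)

/-- One step along an allowed edge between allowed vertices. -/
def Step (S : Set G.V) (A : Set G.E) (x y : G.V) : Prop :=
  x ∈ S ∧ y ∈ S ∧ ∃ e ∈ A, G.ends e = s(x, y)

/-- Reachability using vertices in `S` and edges in `A`. -/
def Reach (S : Set G.V) (A : Set G.E) : G.V → G.V → Prop :=
  Relation.ReflTransGen (G.Step S A)

/-- The (sub)graph with vertices `S` and edges `A` is connected. -/
def ConnectedOn (S : Set G.V) (A : Set G.E) : Prop :=
  S.Nonempty ∧ ∀ x ∈ S, ∀ y ∈ S, G.Reach S A x y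

/-- The (sub)graph with vertices `S` and edges `A` is 2-connected: at least two
vertices, connected, and removing any vertex keeps it connected. -/
def TwoConnectedOn (S : Set G.V) (A : Set G.E) : Prop :=
  2 ≤ Nat.card S ∧ G.ConnectedOn S A ∧ ∀ v ∈ S, G.ConnectedOn (S \ {v}) A

def Connected : Prop := G.ConnectedOn Set.univ Set.univ

def TwoConnected : Prop := G.TwoConnectedOn Set.univ Set.univ

/-- The weight function: weight 1 if deleting the edge preserves 2-connectivity,
and `δ - 1` otherwise (in particular when contracting it preserves 2-connectivity). -/
def w (δ : ℕ) (e : G.E) : ℕ :=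
  if G.TwoConnectedOn Set.univ {e}ᶜ then 1 else δ - 1

def wSum (δ : ℕ) (F : Finset G.E) : ℕ := ∑ e ∈ F, G.w δ e

/-- `E(S)`: the edges with both endpoints in `S`. -/
def edgesIn (S : Finset G.V) : Finset G.E :=
  Finset.univ.filter fun e => ∀ v ∈ G.ends e, v ∈ S

/-- Contraction of (the edges inside) a vertex subset `S` to a single vertex
(the vertex `none`); edges entirely inside `S` are removed. -/
def contract (S : Finset G.V) : Multigraph where
  V := Option {x : G.V // x ∉ S}
  E := {e : G.E // ¬ ∀ v ∈ G.ends e, v ∈ S}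
  ends e := (G.ends e.1).map fun x => if h : x ∈ S then none else some ⟨x, h⟩

/-- A good flat: a proper vertex subset whose induced restriction and whose
contraction are both 2-connected. -/
def GoodFlat (S : Finset G.V) : Prop :=
  S ⊂ Finset.univ ∧ G.TwoConnectedOn ↑S Set.univ ∧ (G.contract S).TwoConnected

/-- The number of blocks (maximal 2-connected vertex subsets). -/
def blockCount : ℕ :=
  Nat.card {S : Finset G.V // Maximal (fun T => G.TwoConnectedOn ↑T Set.univ) S}

/-- `k(S)`: the number of 2-connected components of `G/G|_S`. -/
def k (S : Finset G.V) : ℕ := (G.contract S).blockCount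

/-- Condition `(♠)_δ`. -/
def Spade (δ : ℕ) : Prop :=
  G.wSum δ Finset.univ = δ * (Fintype.card G.V - 1) ∧
  ∀ S : Finset G.V, G.GoodFlat S → G.wSum δ (G.edgesIn S) + 1 = δ * (S.card - 1)

/-- Condition `(♥)_δ`. -/
def Heart (δ : ℕ) : Prop :=
  ∀ S : Finset G.V, G.TwoConnectedOn ↑S Set.univ →
    G.wSum δ (G.edgesIn S) + G.k S = δ * (S.card - 1)

/-- A spanning tree: a connected spanning edge set of the right cardinality. -/
def IsSpanningTree (B : Finset G.E) : Prop :=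
  G.ConnectedOn Set.univ ↑B ∧ B.card = Fintype.card G.V - 1

/-- The base polytope of the graphic matroid of `G`: the convex hull of the
indicator vectors of spanning trees. -/
def basePolytope : Set (G.E → ℝ) :=
  convexHull ℝ
    {x | ∃ B : Finset G.E, G.IsSpanningTree B ∧ x = fun e => if e ∈ B then (1 : ℝ) else 0}

/-- The vertices touched by an edge set. -/
def touched (C : Finset G.E) : Finset G.V :=
  Finset.univ.filter fun v => ∃ e ∈ C, v ∈ G.ends e

/-- A forest (independent set of the graphic matroid): every nonempty subset has
fewer edges than touched vertices. -/
def IsForest (B : Finset G.E) : Prop :=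
  ∀ C ⊆ B, C.Nonempty → C.card < (G.touched C).card

/-- Isomorphism of multigraphs. -/
def IsIsomorphic (G H : Multigraph) : Prop :=
  ∃ (f : G.V ≃ H.V) (g : G.E ≃ H.E), ∀ e, H.ends (g e) = (G.ends e).map f

/-- How `G₂`'s vertices embed into the δ-gluing: `u₂ ↦ u₁`, `v₂ ↦ v₁`. -/
def glueVertexMap (G1 G2 : Multigraph) (u1 v1 : G1.V) (u2 v2 : G2.V) :
    G2.V → G1.V ⊕ {x : G2.V // x ≠ u2 ∧ x ≠ v2} := fun x =>
  if h : x = u2 then Sum.inl u1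
  else if h' : x = v2 then Sum.inl v1
  else Sum.inr ⟨x, h, h'⟩

/-- The δ-gluing of `G₁` and `G₂` along parallel classes `F₁` (between `u₁,v₁`)
and `F₂` (between `u₂,v₂`): identify `u₁ ~ u₂` and `v₁ ~ v₂` and replace
`F₁ ∪ F₂` by `w(F₁) + w(F₂) - δ` parallel edges. -/
def glue (δ : ℕ) (G1 G2 : Multigraph) (u1 v1 : G1.V) (u2 v2 : G2.V)
    (F1 : Finset G1.E) (F2 : Finset G2.E) : Multigraph where
  V := G1.V ⊕ {x : G2.V // x ≠ u2 ∧ x ≠ v2}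
  E := {e : G1.E // e ∉ F1} ⊕ {e : G2.E // e ∉ F2} ⊕
    Fin (G1.wSum δ F1 + G2.wSum δ F2 - δ)
  ends := fun e => match e with
    | Sum.inl e => (G1.ends e.1).map Sum.inl
    | Sum.inr (Sum.inl e) => (G2.ends e.1).map (glueVertexMap G1 G2 u1 v1 u2 v2)
    | Sum.inr (Sum.inr _) => s(Sum.inl u1, Sum.inl v1)

/-- The hypotheses of the δ-gluing construction. -/
def GlueHyp (δ : ℕ) (G1 G2 : Multigraph) (u1 v1 : G1.V) (u2 v2 : G2.V)
    (F1 : Finset G1.E) (F2 : Finset G2.E) : Prop :=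
  2 ≤ δ ∧ G1.TwoConnected ∧ G2.TwoConnected ∧ u1 ≠ v1 ∧ u2 ≠ v2 ∧
  F1.Nonempty ∧ F2.Nonempty ∧
  (∀ e ∈ F1, G1.ends e = s(u1, v1)) ∧ (∀ e ∈ F2, G2.ends e = s(u2, v2))

/-- The `i`-th vertex on the subdivision path (`i = 0` is `u`, `i = k` is `v`). -/
def subdividePoint (G : Multigraph) (u v : G.V) (k : ℕ) (i : ℕ) : G.V ⊕ Fin (k - 1) :=
  if i = 0 then Sum.inl u
  else if h : i - 1 < k - 1 then Sum.inr ⟨i - 1, h⟩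
  else Sum.inl v

/-- Replace the edge `e` (with endpoints `u, v`) by a path of `k` edges through
`k - 1` new interior vertices of degree 2. -/
def subdivide (G : Multigraph) (e : G.E) (u v : G.V) (k : ℕ) : Multigraph where
  V := G.V ⊕ Fin (k - 1)
  E := {f : G.E // f ≠ e} ⊕ Fin k
  ends := fun f => match f with
    | Sum.inl f => (G.ends f.1).map Sum.inl
    | Sum.inr i => s(G.subdividePoint u v k i.1, G.subdividePoint u v k (i.1 + 1))

end Multigraph

/-- The cycle multigraph `C_n`. -/
def cycleGraph (n : ℕ) : Multigraph where
  V := Fin n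
  E := Fin n
  ends i := s(i, finRotate n i)

/-- The loop-free multigraph on two vertices with `n` parallel edges. -/
def bouquet (n : ℕ) : Multigraph where
  V := Fin 2
  E := Fin n
  ends _ := s(0, 1)

/-- The complete graph `K₄`. -/
def K4 : Multigraph where
  V := Fin 4
  E := {p : Sym2 (Fin 4) // ¬p.IsDiag}
  ends p := p.1


/-!
For `δ = 2` every edge has weight `1`, so `(♥)₂` for the pair `S = {u, v}` spanned by an edge
`uv` reads `|E({u, v})| + k({u, v}) = 2`. If `V ≠ {u, v}`, some edge leaves `{u, v}` and gives a
block of `G/G|_S`, so `k({u, v}) ≥ 1` and `uv` has no parallel copy. If `V = {u, v}`, then `G` has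
exactly two edges, so two parallel edges make it `C₂`. Two loops at `u`, together with an edge from
`u` to another vertex `z`, would put three edges into `E({u, z})`.
-/

namespace Multigraph

variable {G : Multigraph}

lemma w_two (e : G.E) : G.w 2 e = 1 := by
  unfold w; split <;> rfl

lemma wSum_two (F : Finset G.E) : G.wSum 2 F = F.card := by
  simp [wSum, w_two]

lemma mem_edgesIn_of_ends_eq {S : Finset G.V} {e : G.E} {x y : G.V}
    (he : G.ends e = s(x, y)) (hx : x ∈ S) (hy : y ∈ S) : e ∈ G.edgesIn S := by
  simp only [edgesIn, Finset.mem_filter, Finset.mem_univ, true_and, he, Sym2.mem_iff]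
  rintro v (rfl | rfl) <;> assumption

lemma edgesIn_univ : G.edgesIn Finset.univ = Finset.univ := by
  ext e; simp [edgesIn]

lemma connectedOn_of_subsingleton {S : Set G.V} (A : Set G.E) (hne : S.Nonempty)
    (hS : S.Subsingleton) : G.ConnectedOn S A :=
  ⟨hne, fun _ hx _ hy => hS hx hy ▸ Relation.ReflTransGen.refl⟩

lemma twoConnectedOn_pair {u v : G.V} {g : G.E} (huv : u ≠ v) (hg : G.ends g = s(u, v)) :
    G.TwoConnectedOn ↑({u, v} : Finset G.V) Set.univ := by
  simp only [TwoConnectedOn, Finset.coe_insert, Finset.coe_singleton]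
  refine ⟨?_, ⟨⟨u, by simp⟩, ?_⟩, ?_⟩
  · rw [Nat.card_coe_set_eq, Set.ncard_pair huv]
  · rintro x (rfl | rfl) y (rfl | rfl)
    · exact .refl
    · exact .single ⟨by simp, by simp, g, trivial, hg⟩
    · exact .single ⟨by simp, by simp, g, trivial, hg.trans Sym2.eq_swap⟩
    · exact .refl
  · rintro x (rfl | rfl)
    · refine connectedOn_of_subsingleton _ ⟨v, by simp [huv.symm]⟩ ?_
      rw [Set.insert_sdiff_self_of_notMem (by simpa using huv)]
      exact Set.subsingleton_singleton
    · refine connectedOn_of_subsingleton _ ⟨u, by simp [huv]⟩ ?_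
      rw [Set.pair_comm, Set.insert_sdiff_self_of_notMem (by simpa using huv.symm)]
      exact Set.subsingleton_singleton

lemma Connected.exists_crossing (hG : G.Connected) {S : Set G.V} {a b : G.V}
    (ha : a ∈ S) (hb : b ∉ S) : ∃ (g : G.E) (x y : G.V), G.ends g = s(x, y) ∧ x ∈ S ∧ y ∉ S := by
  induction (hG.2 a trivial b trivial) with
  | refl => exact absurd ha hb
  | @tail m c _ hmc ih =>
    by_cases hm : m ∈ S
    · obtain ⟨-, -, g, -, hg⟩ := hmc
      exact ⟨g, m, c, hg, hm, hb⟩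
    · exact ih hm

lemma blockCount_pos {T : Set G.V} (hT : G.TwoConnectedOn T Set.univ) : 0 < G.blockCount := by
  obtain ⟨B, -, hB⟩ := Finite.exists_le_maximal (p := fun T => G.TwoConnectedOn T Set.univ) hT
  have : Nonempty {S : Finset G.V // Maximal (fun T => G.TwoConnectedOn T Set.univ) ↑S} :=
    ⟨⟨B.toFinset, by rwa [Set.coe_toFinset]⟩⟩
  exact Nat.card_pos

lemma blockCount_eq_zero (hV : Fintype.card G.V ≤ 1) : G.blockCount = 0 := by
  have : IsEmpty {S : Finset G.V // Maximal (fun T => G.TwoConnectedOn T Set.univ) ↑S} := by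
    refine ⟨fun ⟨S, hS⟩ => ?_⟩
    have h2 := hS.1.1
    have hle := Finite.card_subtype_le (· ∈ (S : Set G.V))
    rw [Nat.card_eq_fintype_card (α := G.V)] at hle
    change 2 ≤ Nat.card {x // x ∈ (S : Set G.V)} at h2
    omega
  exact Nat.card_of_isEmpty

lemma k_univ : G.k Finset.univ = 0 :=
  blockCount_eq_zero <| by simp [contract]

lemma Connected.k_pos (hG : G.Connected) {S : Finset G.V} {a b : G.V}
    (ha : a ∈ S) (hb : b ∉ S) : 0 < G.k S := by
  obtain ⟨g, x, y, hg, hx, hy⟩ := hG.exists_crossing (S := S) ha hb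
  rw [Finset.mem_coe] at hx hy
  have hgS : ¬ ∀ v ∈ G.ends g, v ∈ S := fun h => hy (h y (by simp [hg]))
  refine blockCount_pos (twoConnectedOn_pair (u := none) (v := some ⟨y, hy⟩) (g := ⟨g, hgS⟩)
    (Option.some_ne_none _).symm ?_)
  change (G.ends g).map _ = _
  simp only [hg, Sym2.map_mk, dif_pos hx, dif_neg hy]
  rfl

lemma Heart.card_edgesIn_pair_add_k (hH : G.Heart 2) {u v : G.V} {g : G.E} (huv : u ≠ v)
    (hg : G.ends g = s(u, v)) : (G.edgesIn {u, v}).card + G.k {u, v} = 2 := by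
  simpa [wSum_two, Finset.card_pair huv] using hH _ (twoConnectedOn_pair huv hg)

lemma Heart.eq_of_ends_eq_diag (hG : G.TwoConnected) (hH : G.Heart 2) {e f : G.E} {u : G.V}
    (he : G.ends e = s(u, u)) (hf : G.ends f = s(u, u)) : e = f := by
  by_contra hne
  have hV : 2 ≤ Fintype.card G.V := by
    simpa [Nat.card_eq_fintype_card] using hG.1
  obtain ⟨z, hz⟩ := Fintype.exists_ne_of_one_lt_card hV u
  have hconn : G.Connected := hG.2.1
  obtain ⟨g, x, y, hg, rfl, hy⟩ := hconn.exists_crossing (S := {u}) rfl hz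
  have hyx : x ≠ y := Ne.symm hy
  have hloop_ne : ∀ {d : G.E}, G.ends d = s(x, x) → d ≠ g := fun hd hdg =>
    hyx (Sym2.congr_right.1 (hd.symm.trans (hdg ▸ hg)))
  have hsub : ({e, f, g} : Finset G.E) ⊆ G.edgesIn {x, y} := by
    simp only [Finset.insert_subset_iff, Finset.singleton_subset_iff]
    exact ⟨mem_edgesIn_of_ends_eq he (by simp) (by simp),
      mem_edgesIn_of_ends_eq hf (by simp) (by simp), mem_edgesIn_of_ends_eq hg (by simp) (by simp)⟩
  have hcard : ({e, f, g} : Finset G.E).card = 3 := by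
    rw [Finset.card_insert_of_notMem (by simp [hne, hloop_ne he]), Finset.card_pair (hloop_ne hf)]
  have := Finset.card_le_card hsub
  have := hH.card_edgesIn_pair_add_k hyx hg
  omega

lemma Heart.eq_of_ends_eq_of_ne (hG : G.Connected) (hH : G.Heart 2)
    (hC2 : ¬(Fintype.card G.V = 2 ∧ Fintype.card G.E = 2)) {e f : G.E} {u v : G.V}
    (huv : u ≠ v) (he : G.ends e = s(u, v)) (hf : G.ends f = s(u, v)) : e = f := by
  by_contra hne
  have hpair := hH.card_edgesIn_pair_add_k huv he
  have hsub : ({e, f} : Finset G.E) ⊆ G.edgesIn {u, v} := by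
    simp only [Finset.insert_subset_iff, Finset.singleton_subset_iff]
    exact ⟨mem_edgesIn_of_ends_eq he (by simp) (by simp),
      mem_edgesIn_of_ends_eq hf (by simp) (by simp)⟩
  have h2 := Finset.card_le_card hsub
  rw [Finset.card_pair hne] at h2
  have hfull : ({u, v} : Finset G.V) = Finset.univ := by
    by_contra h
    obtain ⟨b, -, hb⟩ := Finset.exists_of_ssubset (Finset.ssubset_univ_iff.2 h)
    have := hG.k_pos (Finset.mem_insert_self u _) hb
    omega
  rw [hfull, k_univ, edgesIn_univ, Finset.card_univ] at hpair
  exact hC2 ⟨by rw [← Finset.card_univ, ← hfull, Finset.card_pair huv], by omega⟩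

end Multigraph

/-- Every 2-connected multigraph satisfying `(♥)_2` other than the 2-cycle `C₂`
(the multigraph on two vertices with two parallel edges) is a simple graph,
i.e. has no parallel edges. -/
theorem heart_two_simple (G : Multigraph) (hG : G.TwoConnected) (hH : G.Heart 2)
    (hC2 : ¬(Fintype.card G.V = 2 ∧ Fintype.card G.E = 2)) :
    ∀ e f : G.E, G.ends e = G.ends f → e = f := by
  intro e f hef
  obtain ⟨u, v, he⟩ : ∃ u v, G.ends e = s(u, v) := Sym2.exists.1 ⟨_, rfl⟩
  rcases eq_or_ne u v with rfl | huv
  · exact hH.eq_of_ends_eq_diag hG he (hef ▸ he)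
  · exact hH.eq_of_ends_eq_of_ne hG.2.1 hC2 huv he (hef ▸ he)

end
end

section
/- Let G be the δ-gluing of 2-connected multigraphs G_1 and G_2 along F_1 and F_2, with glued vertices u and v. If S is a good flat of G containing both u and v, then either V(G_1) ⊆ S or V(G_2) ⊆ S. -/
open scoped Classical

noncomputable section

/-!
Deleting the contracted vertex from `G/S` leaves `G - S`, so 2-connectivity of `G/S` makes
`G - S` connected. Every edge of the gluing between the two sides has its `G₁`-end at `u` or `v`,
both in `S`, so `G - S` has no edge between the sides; hence one side lies entirely in `S`.
-/

namespace Multigraph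

theorem Reach.preserves {G : Multigraph} {S : Set G.V} {A : Set G.E} {P : G.V → Prop}
    (hP : ∀ x y, G.Step S A x y → P x → P y) {x y : G.V} (h : G.Reach S A x y) (hx : P x) :
    P y := by
  induction h with
  | refl => exact hx
  | tail _ hst ih => exact hP _ _ hst ih

section Contract

variable {G : Multigraph} {S : Finset G.V}

theorem contract_ends_eq_some {e : (G.contract S).E} {a b : {x : G.V // x ∉ S}}
    (h : (G.contract S).ends e = s(some a, some b)) : G.ends e.1 = s(a.1, b.1) := by
  change (G.ends e.1).map _ = _ at h
  generalize G.ends e.1 = p at h ⊢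
  induction p using Sym2.ind with
  | h p q =>
    have val_eq : ∀ (z : G.V) (c : {x : G.V // x ∉ S}),
        (if h : z ∈ S then none else some ⟨z, h⟩) = some c → z = c.1 := by
      intro z c hz
      split_ifs at hz with hzS
      cases hz
      rfl
    rw [Sym2.map_mk, Sym2.eq_iff] at h
    rcases h with ⟨hp, hq⟩ | ⟨hp, hq⟩
    · rw [val_eq _ _ hp, val_eq _ _ hq]
    · rw [val_eq _ _ hp, val_eq _ _ hq, Sym2.eq_swap]

theorem reach_compl_of_connectedOn_contract
    (hS : (G.contract S).ConnectedOn (Set.univ \ {none}) Set.univ) {x y : G.V}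
    (hx : x ∉ S) (hy : y ∉ S) : G.Reach (↑S)ᶜ Set.univ x y := by
  have hreach := hS.2 (some ⟨x, hx⟩) ⟨trivial, Option.some_ne_none _⟩
    (some ⟨y, hy⟩) ⟨trivial, Option.some_ne_none _⟩
  suffices ∀ b, (G.contract S).Reach (Set.univ \ {none}) Set.univ (some ⟨x, hx⟩) b →
      ∀ c, b = some c → G.Reach (↑S)ᶜ Set.univ x c.1 from this _ hreach _ rfl
  intro b hb
  induction hb with
  | refl =>
    rintro c ⟨⟩
    exact Relation.ReflTransGen.refl
  | tail _ hst ih =>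
    rintro c rfl
    obtain ⟨hb, -, e, -, he⟩ := hst
    obtain ⟨b, rfl⟩ := Option.ne_none_iff_exists'.mp hb.2
    exact (ih b rfl).tail ⟨b.2, c.2, e.1, trivial, contract_ends_eq_some he⟩

theorem TwoConnected.reach_compl_of_contract (hS : (G.contract S).TwoConnected) {x y : G.V}
    (hx : x ∉ S) (hy : y ∉ S) : G.Reach (↑S)ᶜ Set.univ x y :=
  reach_compl_of_connectedOn_contract (hS.2.2 none trivial) hx hy

end Contract

section Glue

variable {δ : ℕ} {G1 G2 : Multigraph} {u1 v1 : G1.V} {u2 v2 : G2.V}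
  {F1 : Finset G1.E} {F2 : Finset G2.E}

theorem glueVertexMap_of_isLeft {x : G2.V} (h : (glueVertexMap G1 G2 u1 v1 u2 v2 x).isLeft) :
    glueVertexMap G1 G2 u1 v1 u2 v2 x = .inl u1 ∨ glueVertexMap G1 G2 u1 v1 u2 v2 x = .inl v1 := by
  unfold glueVertexMap at h ⊢
  split_ifs at h ⊢ <;> simp_all

theorem glue_ends_eq_inl_of_isLeft {e : (glue δ G1 G2 u1 v1 u2 v2 F1 F2).E}
    {a b : (glue δ G1 G2 u1 v1 u2 v2 F1 F2).V}
    (he : (glue δ G1 G2 u1 v1 u2 v2 F1 F2).ends e = s(a, b)) (ha : a.isLeft) (hb : ¬ b.isLeft) :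
    a = .inl u1 ∨ a = .inl v1 := by
  have hbe : b ∈ (glue δ G1 G2 u1 v1 u2 v2 F1 F2).ends e := he ▸ Sym2.mem_mk_right a b
  have hae : a ∈ (glue δ G1 G2 u1 v1 u2 v2 F1 F2).ends e := he ▸ Sym2.mem_mk_left a b
  rcases e with e | e | e
  · obtain ⟨b', -, rfl⟩ := Sym2.mem_map.mp hbe
    exact absurd rfl hb
  · obtain ⟨a', -, rfl⟩ := Sym2.mem_map.mp hae
    exact glueVertexMap_of_isLeft ha
  · exact Sym2.mem_iff.mp hae

theorem glue_step_isLeft {S : Finset (glue δ G1 G2 u1 v1 u2 v2 F1 F2).V}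
    {A : Set (glue δ G1 G2 u1 v1 u2 v2 F1 F2).E} (hu : .inl u1 ∈ S) (hv : .inl v1 ∈ S)
    {a b : (glue δ G1 G2 u1 v1 u2 v2 F1 F2).V}
    (hab : (glue δ G1 G2 u1 v1 u2 v2 F1 F2).Step (↑S)ᶜ A a b) (ha : a.isLeft) : b.isLeft := by
  by_contra hb
  obtain ⟨haS, -, e, -, he⟩ := hab
  rcases glue_ends_eq_inl_of_isLeft he ha hb with rfl | rfl
  exacts [haS hu, haS hv]

end Glue

end Multigraph

theorem glue_goodFlat_contains_side_general (δ : ℕ) (G1 G2 : Multigraph)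
    (u1 v1 : G1.V) (u2 v2 : G2.V) (F1 : Finset G1.E) (F2 : Finset G2.E)
    (S : Finset (Multigraph.glue δ G1 G2 u1 v1 u2 v2 F1 F2).V)
    (hS : (Multigraph.glue δ G1 G2 u1 v1 u2 v2 F1 F2).GoodFlat S)
    (hu : Sum.inl u1 ∈ S) (hv : Sum.inl v1 ∈ S) :
    (∀ x : G1.V, Sum.inl x ∈ S) ∨
    (∀ x : G2.V, Multigraph.glueVertexMap G1 G2 u1 v1 u2 v2 x ∈ S) := by
  by_contra! h
  obtain ⟨⟨x1, hx1⟩, ⟨x2, hx2⟩⟩ := h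
  have hreach := hS.2.2.reach_compl_of_contract hx1 hx2
  have hleft := hreach.preserves (fun _ _ => Multigraph.glue_step_isLeft hu hv) rfl
  rcases Multigraph.glueVertexMap_of_isLeft hleft with h | h <;> rw [h] at hx2
  exacts [hx2 hu, hx2 hv]

/-- If `S` is a good flat of the δ-gluing `G` of `G₁` and `G₂` containing both
glued vertices `u` and `v`, then `S` contains all of `V(G₁)` or all of `V(G₂)`. -/
theorem glue_goodFlat_contains_side (δ : ℕ) (G1 G2 : Multigraph)
    (u1 v1 : G1.V) (u2 v2 : G2.V) (F1 : Finset G1.E) (F2 : Finset G2.E)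
    (hglue : Multigraph.GlueHyp δ G1 G2 u1 v1 u2 v2 F1 F2)
    (S : Finset (Multigraph.glue δ G1 G2 u1 v1 u2 v2 F1 F2).V)
    (hS : (Multigraph.glue δ G1 G2 u1 v1 u2 v2 F1 F2).GoodFlat S)
    (hu : Sum.inl u1 ∈ S) (hv : Sum.inl v1 ∈ S) :
    (∀ x : G1.V, Sum.inl x ∈ S) ∨
    (∀ x : G2.V, Multigraph.glueVertexMap G1 G2 u1 v1 u2 v2 x ∈ S) :=
  glue_goodFlat_contains_side_general δ G1 G2 u1 v1 u2 v2 F1 F2 S hS hu hv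
end
end
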